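/- arXiv:math/9801083 — 3 statements merged into one kernel-verified Lean document; each statement's English description precedes it below -/
import Mathlib

section
/- For real q' > 0 with q' ≠ 1, distinct reals k₁ ≠ k₂ with q'^{k₁} ≠ q' and q'^{k₂} ≠ q', and with F(N) := ((q'^{k₂(N+1)} − q'^{k₁(N+1)}) − (q'^{k₂N} − q'^{k₁N}))/(q' − q'^{k₂}), there exists a natural number N such that F(N) ≠ 0. -/
/-- The structure-function discrepancy `F(N,k₁,k₂)` between the general q-oscillator
algebras with parameters `k₁` and `k₂` does not vanish identically. -/
theorem discrepancy_nonvanishing (q' k₁ k₂ : ℝ) (hq : 0 < q') (hq1 : q' ≠ 1)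
    (hk : k₁ ≠ k₂) (h1 : q' ^ k₁ ≠ q') (h2 : q' ^ k₂ ≠ q') :
    ∃ N : ℕ,
      ((q' ^ (k₂ * ((N : ℝ) + 1)) - q' ^ (k₁ * ((N : ℝ) + 1))) -
          (q' ^ (k₂ * (N : ℝ)) - q' ^ (k₁ * (N : ℝ)))) / (q' - q' ^ k₂) ≠ 0 := by
  use 0
  have hlog : Real.log q' ≠ 0 := Real.log_ne_zero_of_pos_of_ne_one hq hq1
  have hab : q' ^ k₂ ≠ q' ^ k₁ := by
    rw [Real.rpow_def_of_pos hq, Real.rpow_def_of_pos hq]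
    intro h
    exact hk (mul_left_cancel₀ hlog (Real.exp_injective h)).symm
  simp only [Nat.cast_zero, mul_zero, zero_add, mul_one, Real.rpow_zero]
  exact div_ne_zero (by simpa using sub_ne_zero.2 hab) (sub_ne_zero.2 (Ne.symm h2))
end

section
/- Let q' > 1 and k ≠ 0 be real, and define g(x) = ([x+1]_k − [x]_k) where [x]_k = (q'^x − q'^{kx})/(q' − q'^k) (assume q'^k ≠ q'). Then there is no real constant Q > 0 such that g(x) = Q^{−2x} for all real x ≥ 0. Equivalently, the function h(x) = −(1/(2x))·ln(g(x)) is non-constant in x > 0 when k ≠ 0. -/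
/-- For `k ≠ 0` there is no constant `Q > 0` with
`[x+1]_k − [x]_k = Q^{−2x}` for all `x ≥ 0`. -/
theorem no_constant_Q (q' k : ℝ) (hq : 1 < q') (hk : k ≠ 0) (hqk : q' ^ k ≠ q') :
    ¬ ∃ Q : ℝ, 0 < Q ∧ ∀ x : ℝ, 0 ≤ x →
      (q' ^ (x + 1) - q' ^ (k * (x + 1))) / (q' - q' ^ k) -
        (q' ^ x - q' ^ (k * x)) / (q' - q' ^ k) = Q ^ (-(2 * x)) := by
  rintro ⟨Q, hQ, h⟩
  have hu0 : (0:ℝ) < q' := lt_trans one_pos hq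
  have hvne : q' ^ k ≠ 1 := by
    rcases lt_or_gt_of_ne hk with hneg | hpos
    · exact ne_of_lt (Real.rpow_lt_one_of_one_lt_of_neg hq hneg)
    · exact ne_of_gt ((Real.one_lt_rpow_iff_of_pos hu0).mpr (Or.inl ⟨hq, hpos⟩))
  have hd : q' - q' ^ k ≠ 0 := sub_ne_zero_of_ne hqk.symm
  set u := q' with hu
  set v := q' ^ k with hv
  have h1 := h 1 zero_le_one
  have h2 := h 2 (by norm_num)
  have eu2 : q' ^ ((1:ℝ) + 1) = u * u := by
    rw [Real.rpow_add hu0, Real.rpow_one]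
  have eu2' : q' ^ ((2:ℝ)) = u * u := by
    rw [show (2:ℝ) = 1 + 1 by norm_num]; exact eu2
  have eu3 : q' ^ ((2:ℝ) + 1) = u * u * u := by
    rw [Real.rpow_add hu0, Real.rpow_one, eu2']
  have ev2 : q' ^ (k * ((1:ℝ) + 1)) = v * v := by
    rw [show k * ((1:ℝ) + 1) = k + k by ring, Real.rpow_add hu0]
  have ev3 : q' ^ (k * ((2:ℝ) + 1)) = v * v * v := by
    rw [show k * ((2:ℝ) + 1) = k + k + k by ring, Real.rpow_add hu0,
      Real.rpow_add hu0]
  have ek1 : q' ^ (k * (1:ℝ)) = v := by rw [mul_one]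
  have ek2 : q' ^ (k * (2:ℝ)) = v * v := by
    rw [show k * (2:ℝ) = k + k by ring, Real.rpow_add hu0]
  set c := Q ^ (-(2:ℝ)) with hc
  have eQ1 : Q ^ (-(2 * (1:ℝ))) = c := by rw [hc]; norm_num
  have eQ2 : Q ^ (-(2 * (2:ℝ))) = c * c := by
    rw [show -(2 * (2:ℝ)) = -2 + -2 by norm_num, Real.rpow_add hQ]
  rw [eu2, ev2, Real.rpow_one, ek1, eQ1] at h1
  rw [eu3, ev3, eu2', ek2, eQ2] at h2
  have H1 : u * u - v * v - (u - v) = c * (u - v) := by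
    field_simp at h1; linarith [h1]
  have H2 : u * u * u - v * v * v - (u * u - v * v) = c * c * (u - v) := by
    field_simp at h2; linarith [h2]
  have hcval : c = u + v - 1 := by
    have : (u - v) * c = (u - v) * (u + v - 1) := by linarith [H1]; 
    exact mul_left_cancel₀ hd this
  have hc2 : c * c = u * u + u * v + v * v - u - v := by
    have : (u - v) * (c * c) = (u - v) * (u * u + u * v + v * v - u - v) := by
      ring_nf; ring_nf at H2; linarith [H2]
    exact mul_left_cancel₀ hd this
  have key : (u - 1) * (v - 1) = 0 := by
    have := hc2
    rw [hcval] at this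
    nlinarith [this]
  rcases mul_eq_zero.mp key with h' | h'
  · exact absurd (by linarith : (1:ℝ) = u) (ne_of_lt hq)
  · exact hvne (by linarith)
end

section
/- For q' > 1, ν ≥ 0, and k ≠ 0 with q'^k ≠ q', the function h(n) = −(1/(2(n+ν)))·ln( ([n+ν+1]_k − [n+ν]_k) ), where [x]_k = (q'^x − q'^{kx})/(q' − q'^k), satisfies h(n₁) ≠ h(n₂) for some positive reals n₁ ≠ n₂ (i.e., h is not constant). -/
/-- For `k ≠ 0` the function
`h(n) = −(1/(2(n+ν)))·ln([n+ν+1]_k − [n+ν]_k)` is not constant on positive reals. -/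
theorem h_not_constant (q' k ν : ℝ) (hq : 1 < q') (hν : 0 ≤ ν) (hk : k ≠ 0)
    (hqk : q' ^ k ≠ q')
    (hpos : ∀ n : ℝ, 0 < n →
      0 < (q' ^ (n + ν + 1) - q' ^ (k * (n + ν + 1))) / (q' - q' ^ k) -
            (q' ^ (n + ν) - q' ^ (k * (n + ν))) / (q' - q' ^ k)) :
    ∃ n₁ n₂ : ℝ, 0 < n₁ ∧ 0 < n₂ ∧ n₁ ≠ n₂ ∧
      -(1 / (2 * (n₁ + ν))) *
          Real.log ((q' ^ (n₁ + ν + 1) - q' ^ (k * (n₁ + ν + 1))) / (q' - q' ^ k) -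
            (q' ^ (n₁ + ν) - q' ^ (k * (n₁ + ν))) / (q' - q' ^ k)) ≠
        -(1 / (2 * (n₂ + ν))) *
          Real.log ((q' ^ (n₂ + ν + 1) - q' ^ (k * (n₂ + ν + 1))) / (q' - q' ^ k) -
            (q' ^ (n₂ + ν) - q' ^ (k * (n₂ + ν))) / (q' - q' ^ k)) := by
  by_contra hcon
  push_neg at hcon
  have hq0 : (0:ℝ) < q' := lt_trans one_pos hq
  set L := Real.log q' with hLdef
  have hL : 0 < L := Real.log_pos hq
  have hr : ∀ x : ℝ, q' ^ x = Real.exp (L * x) := fun x => Real.rpow_def_of_pos hq0 x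
  have hexpL : Real.exp L = q' := Real.exp_log hq0
  have h1ν : (0:ℝ) < 1 + ν := by linarith
  have h2ν : (0:ℝ) < 2 + ν := by linarith
  have h3ν : (0:ℝ) < 3 + ν := by linarith
  have hF1 := hpos 1 one_pos
  have hF2 := hpos 2 two_pos
  have hF3 := hpos 3 (by norm_num)
  have h21 := hcon 2 1 two_pos one_pos (by norm_num)
  have h31 := hcon 3 1 (by norm_num) one_pos (by norm_num)
  set F1 := (q' ^ ((1:ℝ) + ν + 1) - q' ^ (k * ((1:ℝ) + ν + 1))) / (q' - q' ^ k) -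
      (q' ^ ((1:ℝ) + ν) - q' ^ (k * ((1:ℝ) + ν))) / (q' - q' ^ k) with hF1def
  set F2 := (q' ^ ((2:ℝ) + ν + 1) - q' ^ (k * ((2:ℝ) + ν + 1))) / (q' - q' ^ k) -
      (q' ^ ((2:ℝ) + ν) - q' ^ (k * ((2:ℝ) + ν))) / (q' - q' ^ k) with hF2def
  set F3 := (q' ^ ((3:ℝ) + ν + 1) - q' ^ (k * ((3:ℝ) + ν + 1))) / (q' - q' ^ k) -
      (q' ^ ((3:ℝ) + ν) - q' ^ (k * ((3:ℝ) + ν))) / (q' - q' ^ k) with hF3def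
  set t := Real.log F1 / (1 + ν) with htdef
  have hlog1 : Real.log F1 = (1 + ν) * t := by rw [htdef]; field_simp
  have hlog2 : Real.log F2 = (2 + ν) * t := by
    rw [htdef]
    field_simp [h1ν.ne', h2ν.ne'] at h21 ⊢
    linear_combination -h21
  have hlog3 : Real.log F3 = (3 + ν) * t := by
    rw [htdef]
    field_simp [h1ν.ne', h3ν.ne'] at h31 ⊢
    linear_combination -h31
  have hE1 : F1 = Real.exp ((1 + ν) * t) := by rw [← Real.exp_log hF1, hlog1]
  have hE2 : F2 = Real.exp ((2 + ν) * t) := by rw [← Real.exp_log hF2, hlog2]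
  have hE3 : F3 = Real.exp ((3 + ν) * t) := by rw [← Real.exp_log hF3, hlog3]
  rw [hF1def] at hE1
  rw [hF2def] at hE2
  rw [hF3def] at hE3
  simp only [hr] at hE1 hE2 hE3
  have hW : q' - Real.exp (L * k) ≠ 0 :=
    sub_ne_zero.mpr (by rw [← hr k]; exact (Ne.symm hqk))
  rw [div_sub_div_same, div_eq_iff hW] at hE1 hE2 hE3
  -- conversion lemmas
  have c1 : Real.exp (L * ((1:ℝ) + ν + 1)) = Real.exp (L * (1 + ν)) * q' := by
    rw [← hexpL, ← Real.exp_add]; congr 1; ring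
  have c2 : Real.exp (L * (k * ((1:ℝ) + ν + 1))) =
      Real.exp (L * (k * (1 + ν))) * Real.exp (L * k) := by
    rw [← Real.exp_add]; congr 1; ring
  have c3 : Real.exp (L * ((2:ℝ) + ν + 1)) = Real.exp (L * (1 + ν)) * q' * q' := by
    rw [← hexpL, ← Real.exp_add, ← Real.exp_add]; congr 1; ring
  have c4 : Real.exp (L * (k * ((2:ℝ) + ν + 1))) =
      Real.exp (L * (k * (1 + ν))) * Real.exp (L * k) * Real.exp (L * k) := by
    rw [← Real.exp_add, ← Real.exp_add]; congr 1; ring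
  have c5 : Real.exp (L * ((2:ℝ) + ν)) = Real.exp (L * (1 + ν)) * q' := by
    rw [← hexpL, ← Real.exp_add]; congr 1; ring
  have c6 : Real.exp (L * (k * ((2:ℝ) + ν))) =
      Real.exp (L * (k * (1 + ν))) * Real.exp (L * k) := by
    rw [← Real.exp_add]; congr 1; ring
  have c7 : Real.exp (L * ((3:ℝ) + ν + 1)) =
      Real.exp (L * (1 + ν)) * q' * q' * q' := by
    rw [← hexpL, ← Real.exp_add, ← Real.exp_add, ← Real.exp_add]; congr 1; ring
  have c8 : Real.exp (L * (k * ((3:ℝ) + ν + 1))) =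
      Real.exp (L * (k * (1 + ν))) * Real.exp (L * k) * Real.exp (L * k) *
        Real.exp (L * k) := by
    rw [← Real.exp_add, ← Real.exp_add, ← Real.exp_add]; congr 1; ring
  have c9 : Real.exp (L * ((3:ℝ) + ν)) = Real.exp (L * (1 + ν)) * q' * q' := by
    rw [← hexpL, ← Real.exp_add, ← Real.exp_add]; congr 1; ring
  have c10 : Real.exp (L * (k * ((3:ℝ) + ν))) =
      Real.exp (L * (k * (1 + ν))) * Real.exp (L * k) * Real.exp (L * k) := by
    rw [← Real.exp_add, ← Real.exp_add]; congr 1; ring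
  have cE2 : Real.exp (((2:ℝ) + ν) * t) = Real.exp ((1 + ν) * t) * Real.exp t := by
    rw [← Real.exp_add]; congr 1; ring
  have cE3 : Real.exp (((3:ℝ) + ν) * t) =
      Real.exp ((1 + ν) * t) * Real.exp t * Real.exp t := by
    rw [← Real.exp_add, ← Real.exp_add]; congr 1; ring
  rw [c1, c2] at hE1
  rw [c3, c4, c5, c6, cE2] at hE2
  rw [c7, c8, c9, c10, cE3] at hE3
  set P := Real.exp (L * (1 + ν)) with hPdef
  set Q := Real.exp (L * (k * (1 + ν))) with hQdef
  set B := Real.exp (L * k) with hBdef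
  set T := Real.exp t with hTdef
  have hPpos : 0 < P := by rw [hPdef]; exact Real.exp_pos _
  have hQpos : 0 < Q := by rw [hQdef]; exact Real.exp_pos _
  have key : P * (q' - 1) * ((q' - T) * (q' - B)) = 0 := by
    linear_combination hE3 - (T + B) * hE2 + T * B * hE1
  have hu : P * (q' - 1) ≠ 0 := ne_of_gt (mul_pos hPpos (by linarith))
  have hqT : T = q' := by
    rcases mul_eq_zero.mp key with h | h
    · exact absurd h hu
    · rcases mul_eq_zero.mp h with h' | h'
      · linarith [sub_eq_zero.mp h']
      · exact absurd h' hW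
  rw [hqT] at hE2
  have key2 : Q * (1 - B) * (B - q') = 0 := by
    linear_combination hE2 - q' * hE1
  have hBq : B - q' ≠ 0 := sub_ne_zero.mpr (by rw [hBdef, ← hr k]; exact hqk)
  have hB1 : B = 1 := by
    rcases mul_eq_zero.mp key2 with h | h
    · rcases mul_eq_zero.mp h with h' | h'
      · exact absurd h' (ne_of_gt hQpos)
      · linarith
    · exact absurd h hBq
  rw [hBdef] at hB1
  have : L * k = 0 := Real.exp_injective (by rw [hB1, Real.exp_zero])
  rcases mul_eq_zero.mp this with h | h
  · exact absurd h (ne_of_gt hL)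
  · exact hk h
end
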